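/- arXiv:1710.02224 — 5 statements merged into one kernel-verified Lean document; each statement's English description precedes it below -/
import Mathlib

section
/- For every d ≥ 1 and every natural number n with 1 ≤ n < 2^d, the minimum of ∑_{j=0}^{d−1} a_j over all tuples (a_0, …, a_{d−1}) of natural numbers satisfying ∑_{j=0}^{d−1} a_j · 2^j = n equals the binary digit sum of n, i.e. equals (Nat.digits 2 n).sum. (This is the combinatorial core of the paper's shortest-path formula d_i(n) = ∑_j b_j + d for the DilatedRNN with dilations 2^0, …, 2^{d−1}, where b_j are the binary digits of n.) -/
/-!
The base-`b` digit sum `S` satisfies `S (b ^ k * m) = S m ≤ m` and is subadditive, since adding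
with carries only lowers it. Hence any representation `n = ∑ a j * b ^ j` has
`S n ≤ ∑ S (a j * b ^ j) ≤ ∑ a j`, and the digits of `n` themselves give a representation
with `∑ a j = S n`.
-/

namespace Nat

variable {b : ℕ}

theorem digits_sum_eq_mod_add_div (hb : 1 < b) (n : ℕ) :
    (b.digits n).sum = n % b + (b.digits (n / b)).sum := by
  rcases Nat.eq_zero_or_pos n with rfl | hn
  · simp
  · rw [digits_def' hb hn, List.sum_cons]

theorem digits_sum_add_le (hb : 1 < b) (m n : ℕ) :
    (b.digits (m + n)).sum ≤ (b.digits m).sum + (b.digits n).sum := by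
  rcases Nat.eq_zero_or_pos (m + n) with hmn | hmn
  · obtain ⟨rfl, rfl⟩ : m = 0 ∧ n = 0 := by omega
    simp
  -- `c` is the carry out of the lowest digit; each carry trades `b` units of digit sum for one.
  set c := (m % b + n % b) / b
  have hsplit : m + n = m % b + n % b + b * (m / b + n / b) := by
    linarith [Nat.mod_add_div m b, Nat.mod_add_div n b]
  have hdiv : (m + n) / b = m / b + (n / b + c) := by
    rw [hsplit, Nat.add_mul_div_left _ _ (by omega)]
    ring
  have hmod : (m + n) % b + b * c = m % b + n % b := by
    rw [Nat.add_mod, Nat.mod_add_div]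
  have hlt₁ : m / b + (n / b + c) < m + n := hdiv ▸ Nat.div_lt_self hmn hb
  have hlt₂ : n / b + c < m + n := lt_of_le_of_lt (Nat.le_add_left _ _) hlt₁
  have ih₁ := digits_sum_add_le hb (m / b) (n / b + c)
  have ih₂ := digits_sum_add_le hb (n / b) c
  have hc : (b.digits c).sum ≤ c := digit_sum_le b c
  have hcb : c ≤ b * c := Nat.le_mul_of_pos_left c (by omega)
  rw [digits_sum_eq_mod_add_div hb (m + n), digits_sum_eq_mod_add_div hb m,
    digits_sum_eq_mod_add_div hb n, hdiv]
  omega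
termination_by m + n
decreasing_by all_goals assumption

theorem digits_sum_base_pow_mul (hb : 1 < b) (k m : ℕ) :
    (b.digits (b ^ k * m)).sum = (b.digits m).sum := by
  rcases Nat.eq_zero_or_pos m with rfl | hm
  · simp
  · simp [digits_base_pow_mul hb hm]

theorem digits_sum_sum_mul_pow_le {ι : Type*} (hb : 1 < b) (s : Finset ι) (a e : ι → ℕ) :
    (b.digits (∑ i ∈ s, a i * b ^ e i)).sum ≤ ∑ i ∈ s, a i :=
  calc (b.digits (∑ i ∈ s, a i * b ^ e i)).sum
      ≤ ∑ i ∈ s, (b.digits (a i * b ^ e i)).sum :=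
        Finset.le_sum_of_subadditive (fun n ↦ (b.digits n).sum) (by simp)
          (digits_sum_add_le hb) _ _
    _ ≤ ∑ i ∈ s, a i := Finset.sum_le_sum fun i _ ↦ by
        rw [mul_comm, digits_sum_base_pow_mul hb]
        exact digit_sum_le b (a i)

theorem exists_sum_mul_pow_eq_and_sum_eq_digits_sum (hb : 1 < b) {d n : ℕ} (hn : n < b ^ d) :
    ∃ a : Fin d → ℕ, ∑ j, a j * b ^ (j : ℕ) = n ∧ ∑ j, a j = (b.digits n).sum := by
  induction d generalizing n with
  | zero => exact ⟨Fin.elim0, by simp_all, by simp_all⟩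
  | succ d ih =>
    obtain ⟨a, ha, ha'⟩ := ih (n := n / b) (Nat.div_lt_of_lt_mul (by rwa [← pow_succ']))
    refine ⟨Fin.cons (n % b) a, ?_, ?_⟩
    · have htail : ∑ j : Fin d, a j * b ^ ((j : ℕ) + 1) = b * (n / b) := by
        rw [← ha, Finset.mul_sum]
        exact Finset.sum_congr rfl fun j _ ↦ by ring
      simp only [Fin.sum_univ_succ, Fin.cons_zero, Fin.cons_succ, Fin.val_zero, Fin.val_succ,
        pow_zero, mul_one, htail, Nat.mod_add_div]
    · rw [Fin.sum_univ_succ, Fin.cons_zero]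
      simp only [Fin.cons_succ, ha', digits_sum_eq_mod_add_div hb n]

end Nat

theorem min_coin_count_pow_two_general (d n : ℕ) (hn' : n < 2 ^ d) :
    IsLeast {k : ℕ | ∃ a : Fin d → ℕ,
        (∑ j : Fin d, a j * 2 ^ (j : ℕ)) = n ∧ (∑ j : Fin d, a j) = k}
      ((Nat.digits 2 n).sum) := by
  refine ⟨Nat.exists_sum_mul_pow_eq_and_sum_eq_digits_sum one_lt_two hn', ?_⟩
  rintro k ⟨a, rfl, rfl⟩
  exact Nat.digits_sum_sum_mul_pow_le one_lt_two _ a _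

/-- For every `d ≥ 1` and every `n` with `1 ≤ n < 2^d`, the minimum of `∑ a j`
over all tuples `a : Fin d → ℕ` with `∑ a j * 2^j = n` equals the binary digit
sum of `n`. -/
theorem min_coin_count_pow_two (d n : ℕ) (hd : 1 ≤ d) (hn : 1 ≤ n) (hn' : n < 2 ^ d) :
    IsLeast {k : ℕ | ∃ a : Fin d → ℕ,
        (∑ j : Fin d, a j * 2 ^ (j : ℕ)) = n ∧ (∑ j : Fin d, a j) = k}
      ((Nat.digits 2 n).sum) :=
  min_coin_count_pow_two_general d n hn'
end

section
/- For every natural number n and every finitely supported function a : ℕ → ℕ with ∑_j a_j · 2^j = n, one has ∑_j a_j ≥ (Nat.digits 2 n).sum. That is, the binary digit sum of n is a lower bound on the total number of (not necessarily distinct) powers of two summing to n. -/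
/-!
The base-`p` digit sum `s` is subadditive: by Legendre's formula `(p - 1) v_p(n!) = n - s(n)`,
and `m! k! ∣ (m + k)!` gives `v_p(m!) + v_p(k!) ≤ v_p((m + k)!)`. Since moreover
`s(c 2^j) = s(c) ≤ c`, it remains to sum over `j`.
-/

open Nat

theorem Nat.digits_sum_add_le_s1 {p : ℕ} [Fact p.Prime] (m k : ℕ) :
    (p.digits (m + k)).sum ≤ (p.digits m).sum + (p.digits k).sum := by
  have hv : padicValNat p (m + k)! =
      padicValNat p ((m + k).choose k) + padicValNat p m ! + padicValNat p k ! := by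
    rw [← add_choose_mul_factorial_mul_factorial,
      padicValNat.mul (mul_ne_zero (choose_ne_zero (le_add_left k m)) m.factorial_ne_zero)
        k.factorial_ne_zero,
      padicValNat.mul (choose_ne_zero (le_add_left k m)) m.factorial_ne_zero]
  have hm := sub_one_mul_padicValNat_factorial (p := p) m
  have hk := sub_one_mul_padicValNat_factorial (p := p) k
  have hmk := sub_one_mul_padicValNat_factorial (p := p) (m + k)
  rw [hv, mul_add, mul_add] at hmk
  have := digit_sum_le p m
  have := digit_sum_le p k
  have := digit_sum_le p (m + k)
  omega

theorem Nat.digits_sum_mul_base_pow {b : ℕ} (hb : 1 < b) (m k : ℕ) :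
    (b.digits (m * b ^ k)).sum = (b.digits m).sum := by
  rcases m.eq_zero_or_pos with rfl | hm
  · simp
  · rw [mul_comm, digits_base_pow_mul hb hm, List.sum_append, List.sum_replicate, smul_zero,
      zero_add]

/-- For every `n : ℕ` and every finitely supported `a : ℕ →₀ ℕ` with
`∑ j, a j * 2^j = n`, the total multiplicity `∑ j, a j` is at least the binary
digit sum of `n`. -/
theorem digitSum_le_of_sum_pow_two (n : ℕ) (a : ℕ →₀ ℕ)
    (h : (a.sum fun j aj => aj * 2 ^ j) = n) :
    (Nat.digits 2 n).sum ≤ a.sum fun _ aj => aj := by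
  subst h
  calc (Nat.digits 2 (∑ j ∈ a.support, a j * 2 ^ j)).sum
      ≤ ∑ j ∈ a.support, (Nat.digits 2 (a j * 2 ^ j)).sum :=
        Finset.le_sum_of_subadditive (fun n ↦ (Nat.digits 2 n).sum) le_rfl
          Nat.digits_sum_add_le_s1 _ _
    _ ≤ ∑ j ∈ a.support, a j := Finset.sum_le_sum fun j _ => by
        rw [Nat.digits_sum_mul_base_pow one_lt_two]
        exact digit_sum_le 2 (a j)
end

section
/- For every integer M ≥ 2, every d ≥ 1, and every natural number n with 1 ≤ n < M^d, the minimum of ∑_{j=0}^{d−1} a_j over all tuples (a_0, …, a_{d−1}) of natural numbers satisfying ∑_{j=0}^{d−1} a_j · M^j = n equals the base-M digit sum of n, i.e. equals (Nat.digits M n).sum. (This is the minimal-path-length computation for a DilatedRNN with exponentially increasing dilations M^0, …, M^{d−1}.) -/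
/-!
The digit expansion of `n` is an admissible tuple whose coin count is the digit sum `s(n)`.
Conversely, `s` is subadditive (the identity `(b - 1) ∑ᵢ ⌊n / bⁱ⁺¹⌋ = n - s(n)` together with
superadditivity of the floor), `s(a · bʲ) = s(a) ≤ a`, so `s(∑ aⱼ bʲ) ≤ ∑ aⱼ` for every tuple.
-/

open Finset

namespace Nat

theorem ofDigits_eq_sum_range_getD (b : ℕ) {d : ℕ} {L : List ℕ} (hL : L.length ≤ d) :
    ofDigits b L = ∑ j ∈ range d, L.getD j 0 * b ^ j := by
  induction L generalizing d with
  | nil => simp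
  | cons a L ih =>
    cases d with
    | zero => simp at hL
    | succ d =>
      rw [sum_range_succ', ofDigits_cons, ih (by simpa using hL), mul_sum, add_comm]
      simp [pow_succ, mul_comm, mul_assoc]

theorem _root_.List.sum_eq_sum_range_getD {d : ℕ} {L : List ℕ} (hL : L.length ≤ d) :
    L.sum = ∑ j ∈ range d, L.getD j 0 := by
  simpa [ofDigits_one] using ofDigits_eq_sum_range_getD 1 hL

section DigitSum

variable {b : ℕ}

theorem sub_one_mul_sum_div_pow_eq_sub_sum_digits_of_lt_pow (hb : 1 < b) {n K : ℕ}
    (hn : n < b ^ K) :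
    (b - 1) * ∑ i ∈ range K, n / b ^ (i + 1) = n - (b.digits n).sum := by
  rcases eq_or_ne n 0 with rfl | hn0
  · simp
  rw [← sub_one_mul_sum_log_div_pow_eq_sub_sum_digits]
  have hlog : log b n + 1 ≤ K := log_lt_of_lt_pow hn0 hn
  refine congrArg _ (sum_subset (range_subset_range.2 hlog) fun i _ hi => ?_).symm
  rw [mem_range, not_lt] at hi
  exact div_eq_of_lt ((lt_pow_succ_log_self hb n).trans_le (pow_le_pow_right₀ hb.le (by omega)))

theorem sum_digits_add_le (hb : 1 < b) (x y : ℕ) :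
    (b.digits (x + y)).sum ≤ (b.digits x).sum + (b.digits y).sum := by
  have hK : x + y < b ^ (x + y) := Nat.lt_pow_self hb
  have hx := sub_one_mul_sum_div_pow_eq_sub_sum_digits_of_lt_pow hb
    (show x < b ^ (x + y) by omega)
  have hy := sub_one_mul_sum_div_pow_eq_sub_sum_digits_of_lt_pow hb
    (show y < b ^ (x + y) by omega)
  have hxy := sub_one_mul_sum_div_pow_eq_sub_sum_digits_of_lt_pow hb hK
  have hfloor : ∑ i ∈ range (x + y), x / b ^ (i + 1) + ∑ i ∈ range (x + y), y / b ^ (i + 1)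
      ≤ ∑ i ∈ range (x + y), (x + y) / b ^ (i + 1) := by
    rw [← sum_add_distrib]
    exact sum_le_sum fun i _ => div_add_div_le_add_div
  have := Nat.mul_le_mul_left (b - 1) hfloor
  have := digit_sum_le b x
  have := digit_sum_le b y
  have := digit_sum_le b (x + y)
  rw [Nat.mul_add] at *
  omega

theorem sum_digits_sum_le (hb : 1 < b) {ι : Type*} (s : Finset ι) (f : ι → ℕ) :
    (b.digits (∑ i ∈ s, f i)).sum ≤ ∑ i ∈ s, (b.digits (f i)).sum := by
  classical
  induction s using Finset.induction_on with
  | empty => simp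
  | insert i s hi ih =>
    rw [sum_insert hi, sum_insert hi]
    exact (sum_digits_add_le hb _ _).trans (Nat.add_le_add_left ih _)

theorem sum_digits_mul_pow (hb : 1 < b) (m k : ℕ) :
    (b.digits (m * b ^ k)).sum = (b.digits m).sum := by
  rcases eq_or_ne m 0 with rfl | hm
  · simp
  · rw [mul_comm, digits_base_pow_mul hb (pos_of_ne_zero hm)]
    simp

theorem sum_digits_sum_mul_pow_le (hb : 1 < b) {ι : Type*} (s : Finset ι) (a e : ι → ℕ) :
    (b.digits (∑ i ∈ s, a i * b ^ e i)).sum ≤ ∑ i ∈ s, a i :=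
  (sum_digits_sum_le hb s _).trans <| sum_le_sum fun i _ =>
    (sum_digits_mul_pow hb (a i) (e i)).trans_le (digit_sum_le b (a i))

end DigitSum

end Nat

theorem min_coin_count_pow_general (M d n : ℕ) (hM : 2 ≤ M) (hn' : n < M ^ d) :
    IsLeast {k : ℕ | ∃ a : Fin d → ℕ,
        (∑ j : Fin d, a j * M ^ (j : ℕ)) = n ∧ (∑ j : Fin d, a j) = k}
      ((Nat.digits M n).sum) := by
  have hlen : (M.digits n).length ≤ d := (Nat.digits_length_le_iff hM n).2 hn'
  refine ⟨⟨fun j => (M.digits n).getD j 0, ?_, ?_⟩, ?_⟩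
  · rw [Fin.sum_univ_eq_sum_range (fun j => (M.digits n).getD j 0 * M ^ j),
      ← Nat.ofDigits_eq_sum_range_getD M hlen, Nat.ofDigits_digits]
  · rw [Fin.sum_univ_eq_sum_range (fun j => (M.digits n).getD j 0),
      ← List.sum_eq_sum_range_getD hlen]
  · rintro k ⟨a, rfl, rfl⟩
    exact Nat.sum_digits_sum_mul_pow_le hM univ a (fun j => j)

/-- For every `M ≥ 2`, `d ≥ 1`, and `n` with `1 ≤ n < M^d`, the minimum of
`∑ a j` over all tuples `a : Fin d → ℕ` with `∑ a j * M^j = n` equals the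
base-`M` digit sum of `n`. -/
theorem min_coin_count_pow (M d n : ℕ) (hM : 2 ≤ M) (hd : 1 ≤ d)
    (hn : 1 ≤ n) (hn' : n < M ^ d) :
    IsLeast {k : ℕ | ∃ a : Fin d → ℕ,
        (∑ j : Fin d, a j * M ^ (j : ℕ)) = n ∧ (∑ j : Fin d, a j) = k}
      ((Nat.digits M n).sum) :=
  min_coin_count_pow_general M d n hM hn'
end

section
/- Greedy optimality for divisor chains: let s_1 = 1 and s_{i+1} = n_{i+1} · s_i for positive integers n_2, …, n_d (so s_1 ∣ s_2 ∣ ⋯ ∣ s_d). Then for every natural number n, the minimal coin count with denominations (s_1, …, s_d) equals the total greedy digit sum ⌊n / s_d⌋ + ∑_{i=1}^{d−1} ⌊(n mod s_{i+1}) / s_i⌋; in other words, the greedy algorithm (repeatedly using the largest denomination that fits) produces a representation n = ∑_i c_i s_i with the minimum possible total number of coins ∑_i c_i. -/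
/-!
Induct on the number of denominations. With `K * s e` added on top of `s 0, …, s e`, a
representation splits into `A` top coins and a representation of the remainder `m` by the smaller
denominations. The greedy count of `m + A * s (e + 1)` is that of `m` plus `A`, and adding the top
denomination never increases the greedy count of `m`, since `t / K + t % K ≤ t` for `t = m / s e`.
So every representation uses at least as many coins as the greedy one.
-/

open Finset

theorem Nat.div_add_mod_le_self (t K : ℕ) : t / K + t % K ≤ t := by
  rcases K.eq_zero_or_pos with rfl | hK
  · simp
  · have h := Nat.div_add_mod t K
    have : t / K ≤ K * (t / K) := Nat.le_mul_of_pos_left _ hK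
    omega

theorem Nat.dvd_of_forall_dvd_succ {s : ℕ → ℕ} {e : ℕ} (h : ∀ i < e, s i ∣ s (i + 1)) {i : ℕ}
    (hi : i ≤ e) : s i ∣ s e := by
  induction e with
  | zero => rw [Nat.le_zero.1 hi]
  | succ e ih =>
    rcases hi.eq_or_lt with rfl | hi
    · rfl
    · exact (ih (fun j hj => h j (by omega)) (by omega)).trans (h e (by omega))

def greedyCount (s : ℕ → ℕ) (e n : ℕ) : ℕ :=
  n / s e + ∑ i ∈ range e, n % s (i + 1) / s i

def coinCounts (s : ℕ → ℕ) (d n : ℕ) : Set ℕ :=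
  {k | ∃ a : Fin d → ℕ, ∑ i : Fin d, a i * s i = n ∧ ∑ i : Fin d, a i = k}

section greedyCount

variable {s : ℕ → ℕ} {e : ℕ}

theorem greedyCount_zero (hs0 : s 0 = 1) (n : ℕ) : greedyCount s 0 n = n := by
  simp [greedyCount, hs0]

theorem greedyCount_succ_of_lt {r : ℕ} (hr : r < s (e + 1)) :
    greedyCount s (e + 1) r = greedyCount s e r := by
  simp only [greedyCount, sum_range_succ, Nat.div_eq_of_lt hr, Nat.mod_eq_of_lt hr]
  omega

theorem greedyCount_succ_le (hdvd : s e ∣ s (e + 1)) (n : ℕ) :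
    greedyCount s (e + 1) n ≤ greedyCount s e n := by
  obtain ⟨K, hK⟩ := hdvd
  have htop : n / s (e + 1) + n % s (e + 1) / s e ≤ n / s e := by
    rw [hK, ← Nat.div_div_eq_div_mul, Nat.mod_mul_right_div_self]
    exact Nat.div_add_mod_le_self _ _
  simp only [greedyCount, sum_range_succ]
  omega

theorem greedyCount_add_mul (hpos : 0 < s e) (hdvd : ∀ i < e, s (i + 1) ∣ s e) (m A : ℕ) :
    greedyCount s e (m + A * s e) = greedyCount s e m + A := by
  have hmod : ∀ i ∈ range e, (m + A * s e) % s (i + 1) / s i = m % s (i + 1) / s i := by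
    intro i hi
    obtain ⟨c, hc⟩ := hdvd i (mem_range.1 hi)
    rw [hc, ← mul_assoc, mul_right_comm, Nat.add_mul_mod_self_right]
  simp only [greedyCount, sum_congr rfl hmod, Nat.add_mul_div_right _ _ hpos]
  omega

end greedyCount

section coinCounts

variable {s : ℕ → ℕ}

theorem coinCounts_one (hs0 : s 0 = 1) (n : ℕ) : coinCounts s 1 n = {n} := by
  ext k
  simp only [coinCounts, Fin.sum_univ_one, Fin.val_zero, hs0, mul_one, Set.mem_ofPred_eq,
    Set.mem_singleton_iff]
  exact ⟨fun ⟨_, hn, hk⟩ => hk.symm.trans hn, fun hk => ⟨fun _ => n, rfl, hk.symm⟩⟩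

theorem mem_coinCounts_succ {d n k : ℕ} :
    k ∈ coinCounts s (d + 1) n ↔
      ∃ m A k', m + A * s d = n ∧ k' ∈ coinCounts s d m ∧ k' + A = k := by
  constructor
  · rintro ⟨a, rfl, rfl⟩
    refine ⟨_, a (Fin.last d), _, ?_, ⟨fun i => a i.castSucc, rfl, rfl⟩, ?_⟩ <;>
      simp [Fin.sum_univ_castSucc]
  · rintro ⟨m, A, k', rfl, ⟨a, rfl, rfl⟩, rfl⟩
    exact ⟨Fin.snoc a A, by simp [Fin.sum_univ_castSucc], by simp [Fin.sum_univ_castSucc]⟩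

end coinCounts

theorem isLeast_greedyCount_coinCounts {s : ℕ → ℕ} (hs0 : s 0 = 1) {e : ℕ}
    (hpos : ∀ i ≤ e, 0 < s i) (hdvd : ∀ i < e, s i ∣ s (i + 1)) (n : ℕ) :
    IsLeast (coinCounts s (e + 1) n) (greedyCount s e n) := by
  induction e generalizing n with
  | zero => simp [coinCounts_one hs0, greedyCount_zero hs0]
  | succ e ih =>
    have ih := ih (fun i hi => hpos i (by omega)) (fun i hi => hdvd i (by omega))
    have htop : 0 < s (e + 1) := hpos _ le_rfl
    have hadd := greedyCount_add_mul htop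
      (fun i hi => Nat.dvd_of_forall_dvd_succ hdvd (show i + 1 ≤ e + 1 by omega))
    constructor
    · have hgreedy : greedyCount s (e + 1) n
          = greedyCount s e (n % s (e + 1)) + n / s (e + 1) := by
        conv_lhs => rw [← Nat.mod_add_div' n (s (e + 1))]
        rw [hadd, greedyCount_succ_of_lt (Nat.mod_lt _ htop)]
      exact mem_coinCounts_succ.2 ⟨_, _, _, Nat.mod_add_div' n _, (ih _).1, hgreedy.symm⟩
    · rintro k hk
      obtain ⟨m, A, k', rfl, hk', rfl⟩ := mem_coinCounts_succ.1 hk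
      calc greedyCount s (e + 1) (m + A * s (e + 1))
          = greedyCount s (e + 1) m + A := hadd m A
        _ ≤ greedyCount s e m + A := by gcongr; exact greedyCount_succ_le (hdvd e (by omega)) m
        _ ≤ k' + A := by gcongr; exact (ih m).2 hk'

/-- Greedy optimality for divisor chains (`0`-based indexing: denominations
`s 0, …, s (d-1)` with `s 0 = 1` and each `s (i+1)` a positive multiple of
`s i`): for every `n`, the minimal coin count equals the total greedy digit
sum `⌊n / s (d-1)⌋ + ∑_{i<d-1} ⌊(n % s (i+1)) / s i⌋`. -/
theorem greedy_optimal_divisor_chain (d : ℕ) (s : ℕ → ℕ) (hd : 1 ≤ d)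
    (hs0 : s 0 = 1)
    (hchain : ∀ i, i + 1 < d → ∃ k, 0 < k ∧ s (i + 1) = k * s i)
    (n : ℕ) :
    IsLeast {k : ℕ | ∃ a : Fin d → ℕ,
        (∑ i : Fin d, a i * s (i : ℕ)) = n ∧ (∑ i : Fin d, a i) = k}
      (n / s (d - 1) + ∑ i ∈ Finset.range (d - 1), (n % s (i + 1)) / s i) := by
  obtain ⟨e, rfl⟩ : ∃ e, d = e + 1 := ⟨d - 1, by omega⟩
  have hdvd : ∀ i < e, s i ∣ s (i + 1) := fun i hi => by
    obtain ⟨k, -, hk⟩ := hchain i (by omega)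
    exact hk ▸ dvd_mul_left _ _
  have hpos : ∀ i ≤ e, 0 < s i := by
    intro i hi
    induction i with
    | zero => simp [hs0]
    | succ i ih =>
      obtain ⟨k, hk, hsk⟩ := hchain i (by omega)
      rw [hsk]
      exact Nat.mul_pos hk (ih (by omega))
  exact isLeast_greedyCount_coinCounts hs0 hpos hdvd n
end

section
/- Equality case of Theorem 1: fix integers d ≥ 2 and M ≥ 2, and set m = M^{d−1}. Let s_1 = 1 and s_{i+1} = n_{i+1} · s_i for positive integers n_2, …, n_d with s_d = m. Then ∑_{n=0}^{m−1} r_s(n) = ∑_{n=0}^{m−1} r_geom(n) holds if and only if s_i = M^{i−1} for every i, i.e. if and only if s_{i+1}/s_i = M for all 1 ≤ i ≤ d−1. Here r_s and r_geom denote minimal coin counts with denominations (s_1, …, s_d) and (M^0, …, M^{d−1}) respectively. -/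
/-!
For a divisor chain with ratios `b j = s (j + 1) / s j`, the greedy (mixed-radix) representation
is optimal, so the minimal coin count of `n` is the mixed-radix digit sum of `n`. Each digit
position runs uniformly through `0, …, b j - 1` over one period, so the total over a period is
`(∏ b j / 2) * ∑ (b j - 1)`. Since `∏ b j = M ^ (d - 1)` is fixed, the totals for `s` and for the
geometric chain agree iff `∑ b j = (d - 1) * M`, which is the equality case of AM-GM: every
`b j = M`.
-/

/-- The minimal coin count of `n` with the `d` denominations `s 0, …, s (d-1)`. -/
noncomputable def minCoinCount (d : ℕ) (s : ℕ → ℕ) (n : ℕ) : ℕ :=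
  sInf {k : ℕ | ∃ a : Fin d → ℕ,
    (∑ i : Fin d, a i * s (i : ℕ)) = n ∧ (∑ i : Fin d, a i) = k}

open Finset

section MinCoinCount

variable {d : ℕ} {s : ℕ → ℕ}

theorem minCoinCount_congr {t : ℕ → ℕ} (h : ∀ i < d, s i = t i) (n : ℕ) :
    minCoinCount d s n = minCoinCount d t n := by
  have hsum (a : Fin d → ℕ) : ∑ i, a i * s i = ∑ i, a i * t i :=
    sum_congr rfl fun i _ => by rw [h i i.isLt]
  simp only [minCoinCount, hsum]

theorem minCoinCount_le {n : ℕ} (a : Fin d → ℕ) (ha : ∑ i, a i * s i = n) :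
    minCoinCount d s n ≤ ∑ i, a i :=
  Nat.sInf_le ⟨a, ha, rfl⟩

theorem exists_sum_eq_minCoinCount (hs : s 0 = 1) (n : ℕ) :
    ∃ a : Fin (d + 1) → ℕ, ∑ i, a i * s i = n ∧ ∑ i, a i = minCoinCount (d + 1) s n := by
  refine Nat.sInf_mem (s := {k | ∃ a : Fin (d + 1) → ℕ, ∑ i, a i * s i = n ∧ ∑ i, a i = k})
    ⟨n, Fin.cons n 0, ?_, ?_⟩ <;> simp [Fin.sum_univ_succ, hs]

theorem minCoinCount_one (hs : s 0 = 1) (n : ℕ) : minCoinCount 1 s n = n := by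
  obtain ⟨a, ha, hmin⟩ := exists_sum_eq_minCoinCount hs n
  rw [Fin.sum_univ_one] at ha hmin
  rw [← hmin, ← ha, Fin.val_zero, hs, mul_one]

theorem minCoinCount_succ_succ {t : ℕ → ℕ} {c : ℕ} (hc : 0 < c) (hs : s 0 = 1) (ht : t 0 = 1)
    (hst : ∀ i, s (i + 1) = c * t i) (n : ℕ) :
    minCoinCount (d + 2) s n = n % c + minCoinCount (d + 1) t (n / c) := by
  have value (a : Fin (d + 2) → ℕ) :
      ∑ i, a i * s i = a 0 + c * ∑ i : Fin (d + 1), a i.succ * t i := by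
    simp only [Fin.sum_univ_succ (n := d + 1), Fin.val_zero, hs, mul_one, Fin.val_succ, hst,
      mul_sum]
    exact congrArg _ (sum_congr rfl fun i _ => by ring)
  apply le_antisymm
  · obtain ⟨a, ha, hmin⟩ := exists_sum_eq_minCoinCount (d := d) ht (n / c)
    calc minCoinCount (d + 2) s n ≤ ∑ i, Fin.cons (n % c) a i :=
          minCoinCount_le _ (by rw [value]; simp [ha, Nat.mod_add_div])
      _ = n % c + minCoinCount (d + 1) t (n / c) := by simp [Fin.sum_univ_succ, hmin]
  · obtain ⟨a, ha, hmin⟩ := exists_sum_eq_minCoinCount (d := d + 1) hs n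
    rw [value] at ha
    set T := ∑ i : Fin (d + 1), a i.succ * t i
    have hquot : n / c = a 0 / c + T := by rw [← ha, Nat.add_mul_div_left _ _ hc]
    have hrem : n % c = a 0 % c := by rw [← ha, Nat.add_mul_mod_self_left]
    -- trading `c` unit coins for one coin of value `c * t 0 = c` never costs more
    have hcarry : minCoinCount (d + 1) t (n / c) ≤ a 0 / c + ∑ i : Fin (d + 1), a i.succ := by
      calc minCoinCount (d + 1) t (n / c)
          ≤ ∑ i, ((if i = 0 then a 0 / c else 0) + a i.succ) := minCoinCount_le _ (by
            simp [add_mul, sum_add_distrib, ite_mul, ht, hquot, T])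
        _ = a 0 / c + ∑ i : Fin (d + 1), a i.succ := by simp [sum_add_distrib]
    have : a 0 % c + a 0 / c ≤ a 0 := by
      nth_rewrite 3 [← Nat.mod_add_div (a 0) c]
      exact Nat.add_le_add_left (Nat.le_mul_of_pos_left _ hc) _
    rw [← hmin, Fin.sum_univ_succ, hrem]
    omega

end MinCoinCount

theorem Finset.sum_range_mul_eq_sum_sum {M : Type*} [AddCommMonoid M] (f : ℕ → M) (b Q : ℕ) :
    ∑ n ∈ range (b * Q), f n = ∑ q ∈ range Q, ∑ r ∈ range b, f (b * q + r) := by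
  induction Q with
  | zero => simp
  | succ Q ih => rw [Nat.mul_succ, sum_range_add, ih, sum_range_succ]

theorem minCoinCount_prod_range_mul_add {b : ℕ → ℕ} (hb : 0 < b 0) (k q : ℕ) {r : ℕ}
    (hr : r < b 0) :
    minCoinCount (k + 2) (fun i => ∏ j ∈ range i, b j) (b 0 * q + r) =
      r + minCoinCount (k + 1) (fun i => ∏ j ∈ range i, b (j + 1)) q := by
  rw [minCoinCount_succ_succ hb (prod_range_zero _) (prod_range_zero _)
      (fun i => by rw [prod_range_succ', mul_comm]),
    Nat.mul_add_mod, Nat.mod_eq_of_lt hr, Nat.mul_add_div hb, Nat.div_eq_of_lt hr, add_zero]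

theorem two_mul_sum_minCoinCount_prod_range (k : ℕ) (b : ℕ → ℕ) (hb : ∀ j < k, 0 < b j) :
    2 * ∑ n ∈ range (∏ j ∈ range k, b j), minCoinCount (k + 1) (fun i => ∏ j ∈ range i, b j) n =
      (∏ j ∈ range k, b j) * ∑ j ∈ range k, (b j - 1) := by
  induction k generalizing b with
  | zero => simp [minCoinCount_one (s := fun i => ∏ j ∈ range i, b j) (prod_range_zero _)]
  | succ k ih =>
    have hb0 : 0 < b 0 := hb 0 k.succ_pos
    set Q := ∏ j ∈ range k, b (j + 1)
    set m := fun q => minCoinCount (k + 1) (fun i => ∏ j ∈ range i, b (j + 1)) q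
    have hm : 2 * ∑ q ∈ range Q, m q = Q * ∑ j ∈ range k, (b (j + 1) - 1) :=
      ih _ fun j hj => hb (j + 1) (by omega)
    have hdigits : ∑ q ∈ range Q, ∑ r ∈ range (b 0),
        minCoinCount (k + 2) (fun i => ∏ j ∈ range i, b j) (b 0 * q + r) =
          Q * ∑ r ∈ range (b 0), r + b 0 * ∑ q ∈ range Q, m q := by
      calc _ = ∑ q ∈ range Q, (∑ r ∈ range (b 0), r + b 0 * m q) := sum_congr rfl fun q _ => by
            rw [sum_congr rfl fun r hr => minCoinCount_prod_range_mul_add hb0 k q (mem_range.1 hr),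
              sum_add_distrib, sum_const, card_range, smul_eq_mul]
        _ = _ := by rw [sum_add_distrib, sum_const, card_range, smul_eq_mul, ← mul_sum]
    have hgauss := sum_range_id_mul_two (b 0)
    rw [prod_range_succ', mul_comm _ (b 0), sum_range_mul_eq_sum_sum, hdigits, sum_range_succ']
    linear_combination Q * hgauss + b 0 * hm

theorem Finset.eq_of_sum_eq_card_mul_of_prod_eq_pow {ι : Type*} {s : Finset ι} {f : ι → ℕ}
    {M : ℕ} (hsum : ∑ i ∈ s, f i = #s * M) (hprod : ∏ i ∈ s, f i = M ^ #s) :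
    ∀ i ∈ s, f i = M := by
  rcases s.eq_empty_or_nonempty with rfl | hne
  · simp
  have hcard : (#s : ℝ) ≠ 0 := by exact_mod_cast hne.card_pos.ne'
  have hw : ∑ _i ∈ s, ((#s : ℝ))⁻¹ = 1 := by simp [hcard]
  have hgeom : ∏ i ∈ s, (f i : ℝ) ^ ((#s : ℝ))⁻¹ = M := by
    rw [Real.finsetProd_rpow _ _ (fun i _ => by positivity), ← Nat.cast_prod, hprod,
      Nat.cast_pow, Real.pow_rpow_inv_natCast (by positivity) hne.card_pos.ne']
  have harith : ∑ i ∈ s, ((#s : ℝ))⁻¹ * f i = M := by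
    rw [← mul_sum, ← Nat.cast_sum, hsum, Nat.cast_mul, inv_mul_cancel_left₀ hcard]
  have := (Real.geom_mean_eq_arith_mean_weighted_iff_of_pos' s _ (fun i => (f i : ℝ))
    (fun _ _ => by positivity) hw (fun _ _ => by positivity)).1 (hgeom.trans harith.symm)
  intro i hi
  exact_mod_cast (this i hi).trans harith

theorem eq_prod_range_of_succ_eq_mul {s c : ℕ → ℕ} {d : ℕ} (hs0 : s 0 = 1)
    (hsucc : ∀ i, i + 1 < d → s (i + 1) = c i * s i) : ∀ i < d, s i = ∏ j ∈ range i, c j := by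
  intro i hi
  induction i with
  | zero => simpa using hs0
  | succ i ih => rw [hsucc i hi, ih (by omega), prod_range_succ, mul_comm]

theorem eq_of_sum_minCoinCount_prod_range_eq_sum_minCoinCount_pow {k M : ℕ} {c : ℕ → ℕ} (hc : ∀ j < k, 0 < c j)
    (hprod : ∏ j ∈ range k, c j = M ^ k)
    (heq : ∑ n ∈ range (M ^ k), minCoinCount (k + 1) (fun i => ∏ j ∈ range i, c j) n =
      ∑ n ∈ range (M ^ k), minCoinCount (k + 1) (fun i => M ^ i) n) :
    ∀ j < k, c j = M := by
  rcases k.eq_zero_or_pos with rfl | hk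
  · simp
  have hMk : 0 < M ^ k := hprod ▸ prod_pos fun j hj => hc j (mem_range.1 hj)
  have hM : 0 < M := (Nat.pow_pos_iff.1 hMk).resolve_right hk.ne'
  have htotal := two_mul_sum_minCoinCount_prod_range k c hc
  have hgeom := two_mul_sum_minCoinCount_prod_range k (fun _ => M) fun _ _ => hM
  simp only [prod_const, card_range, sum_const, smul_eq_mul] at hgeom
  rw [hprod, heq, hgeom] at htotal
  have hdefect : ∑ j ∈ range k, (c j - 1) = k * (M - 1) :=
    (Nat.eq_of_mul_eq_mul_left hMk htotal).symm
  have hsum : ∑ j ∈ range k, c j = #(range k) * M := by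
    calc ∑ j ∈ range k, c j = ∑ j ∈ range k, ((c j - 1) + 1) :=
          sum_congr rfl fun j hj => (Nat.sub_add_cancel (hc j (mem_range.1 hj))).symm
      _ = #(range k) * M := by
        rw [sum_add_distrib, hdefect, sum_const, card_range, smul_eq_mul, mul_one,
          ← mul_add_one, Nat.sub_one_add_one hM.ne']
  intro j hj
  exact eq_of_sum_eq_card_mul_of_prod_eq_pow hsum (by rw [hprod, card_range]) j (mem_range.2 hj)

theorem dilatedRNN_equality_case_general (d M : ℕ)
    (s : ℕ → ℕ) (hs0 : s 0 = 1)
    (hchain : ∀ i, i + 1 < d → ∃ k, 0 < k ∧ s (i + 1) = k * s i)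
    (hsd : s (d - 1) = M ^ (d - 1)) :
    (∑ n ∈ Finset.range (M ^ (d - 1)), minCoinCount d s n =
        ∑ n ∈ Finset.range (M ^ (d - 1)), minCoinCount d (fun i => M ^ i) n) ↔
      ∀ i < d, s i = M ^ i := by
  refine ⟨fun heq => ?_, fun h => sum_congr rfl fun n _ => minCoinCount_congr h n⟩
  obtain _ | k := d
  · exact fun i hi => absurd hi i.not_lt_zero
  choose! c hc hsc using hchain
  have hs := eq_prod_range_of_succ_eq_mul hs0 hsc
  simp only [add_tsub_cancel_right, minCoinCount_congr hs] at hsd heq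
  have hcM := eq_of_sum_minCoinCount_prod_range_eq_sum_minCoinCount_pow (fun j hj => hc j (by omega))
    (by rw [← hs k k.lt_succ_self, hsd]) heq
  intro i hi
  rw [hs i hi, prod_congr rfl fun j hj => hcM j ((mem_range.1 hj).trans_le (Nat.lt_succ_iff.1 hi)), prod_const, card_range]

/-- Equality case of Theorem 1 (`0`-based indexing): for `d ≥ 2`, `M ≥ 2`, and
a divisor chain `s 0 = 1, …, s (d-1) = m = M^(d-1)`, the total minimal coin
count over one period equals that of the geometric denominations
`M^0, …, M^(d-1)` if and only if `s i = M^i` for every `i < d`. -/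
theorem dilatedRNN_equality_case (d M : ℕ) (hd : 2 ≤ d) (hM : 2 ≤ M)
    (s : ℕ → ℕ) (hs0 : s 0 = 1)
    (hchain : ∀ i, i + 1 < d → ∃ k, 0 < k ∧ s (i + 1) = k * s i)
    (hsd : s (d - 1) = M ^ (d - 1)) :
    (∑ n ∈ Finset.range (M ^ (d - 1)), minCoinCount d s n =
        ∑ n ∈ Finset.range (M ^ (d - 1)), minCoinCount d (fun i => M ^ i) n) ↔
      ∀ i < d, s i = M ^ i :=
  dilatedRNN_equality_case_general d M s hs0 hchain hsd
end
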